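/- Let H ⊆ 𝒪⁺ and δ ∈ 𝒪⁺. The number of partitions of δ with all parts in H equals the sum, over primitive partitions λ = (γ₁^{n₁}⋯γ_l^{n_l}) of δ, of the product over h of the number of partitions of n_hγ_h with all parts in H ∩ γ_hℤ⁺. -/

import Mathlib

open NumberField
open scoped Classical

/-- `K` is totally real: every complex embedding has real image. -/
def TotallyReal (K : Type) [Field K] [NumberField K] : Prop :=
  ∀ φ : K →+* ℂ, ∀ x : K, (φ x).im = 0

/-- An algebraic integer is totally positive if every real embedding sends it to a
positive real number. -/
def TPos (K : Type) [Field K] [NumberField K] (x : 𝓞 K) : Prop :=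
  ∀ φ : K →+* ℝ, 0 < φ (x : K)

/-- `γ ∈ 𝒪⁺` is primitive over `ℚ`: it is not `m • β` for any integer `m ≥ 2`
and totally positive `β`. -/
def IsPrim (K : Type) [Field K] [NumberField K] (γ : 𝓞 K) : Prop :=
  TPos K γ ∧ ∀ (m : ℕ) (β : 𝓞 K), 2 ≤ m → TPos K β → γ ≠ (m : 𝓞 K) * β

/-- A partition of `δ ∈ 𝒪⁺`: a finite multiset of totally positive integers summing to `δ`. -/
def IsPartition (K : Type) [Field K] [NumberField K] (δ : 𝓞 K) (lam : Multiset (𝓞 K)) : Prop :=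
  (∀ x ∈ lam, TPos K x) ∧ lam.sum = δ

variable (K : Type) [Field K] [NumberField K]

/-- Realification of a complex embedding of a totally real field. -/
noncomputable def realEmb (hK : TotallyReal K) (φ : K →+* ℂ) : K →+* ℝ where
  toFun x := (φ x).re
  map_one' := by simp
  map_zero' := by simp
  map_add' x y := by simp
  map_mul' x y := by simp [Complex.mul_re, hK φ x]

lemma realEmb_eq (hK : TotallyReal K) (φ : K →+* ℂ) (x : K) :
    φ x = ((realEmb K hK φ x : ℝ) : ℂ) := by
  apply Complex.ext
  · rfl
  · simpa using hK φ x

lemma tpos_ne_zero (φ₀ : K →+* ℝ) {x : 𝓞 K} (hx : TPos K x) : x ≠ 0 := by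
  intro h
  have := hx φ₀
  rw [h] at this
  simp at this

lemma tpos_mul_nat {k : ℕ} (hk : 0 < k) {β : 𝓞 K} (hβ : TPos K β) :
    TPos K ((k : 𝓞 K) * β) := by
  intro φ
  have : ((((k : 𝓞 K) * β : 𝓞 K)) : K) = (k : K) * (β : K) := by push_cast; ring
  rw [this, map_mul, map_natCast]
  have := hβ φ
  positivity

lemma exists_pdec (φ₀ : K →+* ℝ) {x : 𝓞 K} (hx : TPos K x) :
    ∃ p : ℕ × 𝓞 K, 0 < p.1 ∧ IsPrim K p.2 ∧ x = (p.1 : 𝓞 K) * p.2 := by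
  have hx0 : x ≠ 0 := tpos_ne_zero K φ₀ hx
  set b := RingOfIntegers.basis K with hb
  have hrepr : b.repr x ≠ 0 := by
    intro h
    exact hx0 (by simpa using congrArg b.repr.symm h)
  obtain ⟨i, hi⟩ := Finsupp.ne_iff.mp hrepr
  simp only [Finsupp.coe_zero, Pi.zero_apply] at hi
  set c : ℤ := b.repr x i with hc
  -- any m in a decomposition divides c
  have hbound : ∀ m : ℕ, ∀ β : 𝓞 K, x = (m : 𝓞 K) * β → m ≤ c.natAbs := by
    intro m β hxm
    have hsm : x = m • β := by rw [hxm, nsmul_eq_mul]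
    have h1 : c = (m : ℤ) * b.repr β i := by
      rw [hc, hsm, map_nsmul, Finsupp.smul_apply, nsmul_eq_mul]
    have hd : b.repr β i ≠ 0 := by
      intro h
      rw [h, mul_zero] at h1
      exact hi h1
    have hnat : c.natAbs = m * (b.repr β i).natAbs := by
      rw [h1, Int.natAbs_mul, Int.natAbs_natCast]
    rw [hnat]
    have h1le : 1 ≤ (b.repr β i).natAbs := Nat.one_le_iff_ne_zero.mpr (Int.natAbs_ne_zero.mpr hd)
    calc m = m * 1 := (mul_one m).symm
    _ ≤ m * (b.repr β i).natAbs := Nat.mul_le_mul_left m h1le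
  set T : Finset ℕ := (Finset.range (c.natAbs + 1)).filter
      (fun m => ∃ β : 𝓞 K, TPos K β ∧ x = (m : 𝓞 K) * β) with hT
  have h1T : 1 ∈ T := by
    rw [hT, Finset.mem_filter, Finset.mem_range]
    refine ⟨?_, x, hx, by simp⟩
    have : 1 ≤ c.natAbs := Nat.one_le_iff_ne_zero.mpr (Int.natAbs_ne_zero.mpr hi)
    omega
  have hTne : T.Nonempty := ⟨1, h1T⟩
  set m := T.max' hTne with hm
  obtain ⟨-, β, hβ, hxβ⟩ := Finset.mem_filter.mp (T.max'_mem hTne)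
  rw [← hm] at hxβ
  have hm1 : 1 ≤ m := Finset.le_max' T 1 h1T
  refine ⟨(m, β), hm1, ⟨hβ, ?_⟩, hxβ⟩
  intro m' β' hm' hβ' hβeq
  have hβeq' : β = (m' : 𝓞 K) * β' := hβeq
  have hx' : x = ((m * m' : ℕ) : 𝓞 K) * β' := by
    rw [hxβ, hβeq']; push_cast; ring
  have hmem : m * m' ∈ T := by
    rw [hT, Finset.mem_filter, Finset.mem_range]
    exact ⟨by have := hbound (m * m') β' hx'; omega, β', hβ', hx'⟩
  have := Finset.le_max' T (m * m') hmem
  rw [← hm] at this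
  nlinarith

lemma coprime_q_one {p q : ℕ} (hpq : Nat.Coprime p q) (hq : 0 < q)
    {γ γ' : 𝓞 K} (hγ : IsPrim K γ) (h : (p : 𝓞 K) * γ = (q : 𝓞 K) * γ') : q = 1 := by
  by_contra hq1
  have hq2 : 2 ≤ q := by omega
  obtain ⟨a, b, hab⟩ := (Nat.isCoprime_iff_coprime.mpr hpq)
  set β : 𝓞 K := a • γ' + b • γ with hβ
  have hγβ : γ = (q : 𝓞 K) * β := by
    have h1 : ((a * (p : ℤ) + b * (q : ℤ) : ℤ) : 𝓞 K) = 1 := by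
      rw [hab]; simp
    calc γ = ((a * (p : ℤ) + b * (q : ℤ) : ℤ) : 𝓞 K) * γ := by rw [h1, one_mul]
    _ = (q : 𝓞 K) * β := by
        rw [hβ, zsmul_eq_mul, zsmul_eq_mul]
        push_cast
        linear_combination (a : 𝓞 K) * h
  have hβpos : TPos K β := by
    intro φ
    have hγφ := hγ.1 φ
    rw [hγβ] at hγφ
    have hcast : ((((q : 𝓞 K) * β : 𝓞 K)) : K) = (q : K) * (β : K) := by push_cast; ring
    rw [hcast, map_mul, map_natCast] at hγφ
    nlinarith [hγφ, show (0:ℝ) < (q:ℝ) by exact_mod_cast hq]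
  exact hγ.2 q β hq2 hβpos hγβ

lemma pdec_unique {k k' : ℕ} {γ γ' : 𝓞 K} (hk : 0 < k) (hk' : 0 < k')
    (hγ : IsPrim K γ) (hγ' : IsPrim K γ') (h : (k : 𝓞 K) * γ = (k' : 𝓞 K) * γ') :
    k = k' ∧ γ = γ' := by
  set g := Nat.gcd k k' with hg
  have hgpos : 0 < g := Nat.gcd_pos_of_pos_left k' hk
  set p := k / g with hp
  set q := k' / g with hq
  have hkp : k = g * p := (Nat.mul_div_cancel' (Nat.gcd_dvd_left k k')).symm
  have hkq : k' = g * q := (Nat.mul_div_cancel' (Nat.gcd_dvd_right k k')).symm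
  have hppos : 0 < p := by
    rcases Nat.eq_zero_or_pos p with h0 | h0
    · rw [h0, mul_zero] at hkp; omega
    · exact h0
  have hqpos : 0 < q := by
    rcases Nat.eq_zero_or_pos q with h0 | h0
    · rw [h0, mul_zero] at hkq; omega
    · exact h0
  have hcop : Nat.Coprime p q := Nat.coprime_div_gcd_div_gcd hgpos
  have hpq : (p : 𝓞 K) * γ = (q : 𝓞 K) * γ' := by
    have hcancel : (g : 𝓞 K) * ((p : 𝓞 K) * γ) = (g : 𝓞 K) * ((q : 𝓞 K) * γ') := by
      rw [hkp, hkq] at h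
      push_cast at h
      linear_combination h
    exact mul_left_cancel₀ (by exact_mod_cast hgpos.ne') hcancel
  have hq1 : q = 1 := coprime_q_one K hcop hqpos hγ hpq
  have hp1 : p = 1 := coprime_q_one K hcop.symm hppos hγ' hpq.symm
  have hkk : k = k' := by rw [hkp, hkq, hq1, hp1]
  refine ⟨hkk, ?_⟩
  rw [hp1, hq1] at hpq
  simpa using hpq

/-- The canonical primitive decomposition of a totally positive integer. -/
noncomputable def pdec (x : 𝓞 K) : ℕ × 𝓞 K :=
  if h : ∃ p : ℕ × 𝓞 K, 0 < p.1 ∧ IsPrim K p.2 ∧ x = (p.1 : 𝓞 K) * p.2 then h.choose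
  else (0, 0)

lemma pdec_spec (φ₀ : K →+* ℝ) {x : 𝓞 K} (hx : TPos K x) :
    0 < (pdec K x).1 ∧ IsPrim K (pdec K x).2 ∧ x = ((pdec K x).1 : 𝓞 K) * (pdec K x).2 := by
  have h := exists_pdec K φ₀ hx
  rw [pdec, dif_pos h]
  exact h.choose_spec

lemma pdec_eq (φ₀ : K →+* ℝ) {k : ℕ} {γ x : 𝓞 K} (hk : 0 < k) (hγ : IsPrim K γ)
    (hx : x = (k : 𝓞 K) * γ) : pdec K x = (k, γ) := by
  have hxpos : TPos K x := hx ▸ tpos_mul_nat K hk hγ.1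
  obtain ⟨h1, h2, h3⟩ := pdec_spec K φ₀ hxpos
  obtain ⟨he1, he2⟩ := pdec_unique K h1 hk h2 hγ (by rw [← h3, ← hx])
  exact Prod.ext he1 he2

/-- The map sending a partition to its associated primitive partition. -/
noncomputable def Phi (lam : Multiset (𝓞 K)) : Multiset (𝓞 K) :=
  lam.bind fun x => Multiset.replicate (pdec K x).1 (pdec K x).2

lemma Phi_zero : Phi K 0 = 0 := rfl

lemma Phi_add (s t : Multiset (𝓞 K)) : Phi K (s + t) = Phi K s + Phi K t :=
  Multiset.add_bind s t _

lemma addhom_finset_sum {α β ι : Type*} (F : Multiset α → Multiset β) (h0 : F 0 = 0)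
    (hadd : ∀ a b, F (a + b) = F a + F b) (t : Finset ι) (g : ι → Multiset α) :
    F (∑ i ∈ t, g i) = ∑ i ∈ t, F (g i) := by
  classical
  induction t using Finset.induction with
  | empty => simpa using h0
  | insert _ _ hnew ih =>
    rw [Finset.sum_insert hnew, Finset.sum_insert hnew, hadd, ih]

lemma Phi_sum_eq (φ₀ : K →+* ℝ) {lam : Multiset (𝓞 K)} (hlam : ∀ x ∈ lam, TPos K x) :
    (Phi K lam).sum = lam.sum := by
  rw [Phi, Multiset.sum_bind]
  have : lam.map (fun x => (Multiset.replicate (pdec K x).1 (pdec K x).2).sum) = lam.map id := by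
    apply Multiset.map_congr rfl
    intro x hx
    rw [Multiset.sum_replicate, nsmul_eq_mul, id_eq]
    exact ((pdec_spec K φ₀ (hlam x hx)).2.2).symm
  rw [this, Multiset.map_id]

lemma Phi_mem_prim (φ₀ : K →+* ℝ) {lam : Multiset (𝓞 K)} (hlam : ∀ x ∈ lam, TPos K x) :
    ∀ γ ∈ Phi K lam, IsPrim K γ := by
  intro γ hγ
  rw [Phi, Multiset.mem_bind] at hγ
  obtain ⟨x, hx, hγ⟩ := hγ
  rw [Multiset.eq_of_mem_replicate hγ]
  exact (pdec_spec K φ₀ (hlam x hx)).2.1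

lemma sum_map_ite {α M : Type*} [AddCommMonoid M] (p : α → Prop) [DecidablePred p]
    (f : α → M) (s : Multiset α) :
    (s.map fun x => if p x then f x else 0).sum = ((s.filter p).map f).sum := by
  induction s using Multiset.induction with
  | empty => simp
  | cons a s ih =>
    by_cases h : p a <;> simp [Multiset.filter_cons, h, ih]

lemma count_Phi (γ : 𝓞 K) (lam : Multiset (𝓞 K)) :
    (Phi K lam).count γ
      = ((lam.filter fun x => (pdec K x).2 = γ).map fun x => (pdec K x).1).sum := by
  rw [Phi, Multiset.count_bind]
  simp only [Multiset.count_replicate]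
  exact sum_map_ite _ _ lam

lemma sum_of_multiples (γ : 𝓞 K) (m : Multiset (𝓞 K))
    (h : ∀ x ∈ m, x = ((pdec K x).1 : 𝓞 K) * γ) :
    m.sum = (((m.map fun x => (pdec K x).1).sum : ℕ) : 𝓞 K) * γ := by
  induction m using Multiset.induction with
  | empty => simp
  | cons a s ih =>
    have ha := h a (Multiset.mem_cons_self a s)
    rw [Multiset.sum_cons, Multiset.map_cons, Multiset.sum_cons, Nat.cast_add, add_mul,
      ih (fun x hx => h x (Multiset.mem_cons_of_mem hx)), ← ha]

lemma sum_filter_eq {α β : Type*} [DecidableEq β] (g : α → β) (m : Multiset α) (t : Finset β)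
    (h : ∀ x ∈ m, g x ∈ t) : ∑ γ ∈ t, m.filter (fun x => g x = γ) = m := by
  induction m using Multiset.induction with
  | empty => simp
  | cons a m ih =>
    simp only [Multiset.filter_cons]
    rw [Finset.sum_add_distrib, ih (fun x hx => h x (Multiset.mem_cons_of_mem hx)),
      Finset.sum_ite_eq, if_pos (h a (Multiset.mem_cons_self a m)),
      Multiset.singleton_add]

lemma multisets_finite {α : Type*} [DecidableEq α] (s : Finset α) (N : ℕ) :
    {m : Multiset α | (∀ x ∈ m, x ∈ s) ∧ Multiset.card m ≤ N}.Finite := by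
  have hsub : {m : Multiset α | (∀ x ∈ m, x ∈ s) ∧ Multiset.card m ≤ N} ⊆
      ⋃ n ∈ Finset.range (N + 1),
        (Subtype.val '' ((s.sym n : Finset (Sym α n)) : Set (Sym α n))) := by
    intro m hm
    obtain ⟨hm1, hm2⟩ := hm
    simp only [Set.mem_iUnion, exists_prop]
    refine ⟨Multiset.card m, ?_, ⟨⟨m, rfl⟩, ?_, rfl⟩⟩
    · rw [Finset.mem_range]; omega
    · show (Sym.mk m rfl : Sym α (Multiset.card m)) ∈ ((s.sym (Multiset.card m) : Finset (Sym α _)) : Set (Sym α _))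
      rw [Finset.mem_coe, Finset.mem_sym_iff]
      intro a ha
      exact hm1 a ha
  exact Set.Finite.subset
    (Set.Finite.biUnion (Finset.range (N + 1)).finite_toSet
      (fun n _ => (s.sym n).finite_toSet.image _)) hsub

omit [NumberField K] in
lemma coe_multiset_sum (m : Multiset (𝓞 K)) :
    ((m.sum : 𝓞 K) : K) = (m.map fun y : 𝓞 K => (y : K)).sum := by
  simpa [RingOfIntegers.coe_eq_algebraMap] using map_multiset_sum (algebraMap (𝓞 K) K) m

lemma parts_finite (hK : TotallyReal K) (δ : 𝓞 K) :
    {lam : Multiset (𝓞 K) | IsPartition K δ lam}.Finite := by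
  classical
  set B : ℝ := ∑ φ : K →+* ℂ, ‖φ (δ : K)‖ with hB
  set A : Set (𝓞 K) := {x | TPos K x ∧ ∀ φ : K →+* ℂ, ‖φ (x : K)‖ ≤ B} with hA
  have hAfin : A.Finite := by
    have hS := Embeddings.finite_of_norm_le K ℂ B
    have hsub : A ⊆ (fun x : 𝓞 K => (x : K)) ⁻¹'
        {x : K | IsIntegral ℤ x ∧ ∀ φ : K →+* ℂ, ‖φ x‖ ≤ B} := by
      intro x hx
      exact ⟨RingOfIntegers.isIntegral_coe x, hx.2⟩
    exact (hS.preimage (RingOfIntegers.coe_injective.injOn)).subset hsub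
  -- every part of a partition of δ lies in A
  have hmem : ∀ lam : Multiset (𝓞 K), IsPartition K δ lam → ∀ x ∈ lam, x ∈ A := by
    intro lam hlam x hx
    refine ⟨hlam.1 x hx, fun φ => ?_⟩
    set ψ := realEmb K hK φ with hψ
    obtain ⟨rest, hrest⟩ := Multiset.exists_cons_of_mem hx
    have hsum : ψ (δ : K) = ψ (x : K) + ψ ((rest.sum : 𝓞 K) : K) := by
      rw [← map_add, ← hlam.2, hrest]
      congr 1
      push_cast [Multiset.sum_cons]
      ring
    have hrest_nonneg : 0 ≤ ψ ((rest.sum : 𝓞 K) : K) := by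
      rw [coe_multiset_sum, map_multiset_sum]
      apply Multiset.sum_nonneg
      intro r hr
      rw [Multiset.map_map, Multiset.mem_map] at hr
      obtain ⟨y, hy, rfl⟩ := hr
      have : TPos K y := hlam.1 y (hrest ▸ Multiset.mem_cons_of_mem hy)
      exact le_of_lt (this ψ)
    have hxpos : 0 < ψ (x : K) := hlam.1 x hx ψ
    have h1 : ‖φ (x : K)‖ ≤ ‖φ (δ : K)‖ := by
      rw [realEmb_eq K hK φ (x : K), realEmb_eq K hK φ (δ : K)]
      simp only [Complex.norm_real, Real.norm_eq_abs]
      rw [abs_of_pos hxpos, abs_of_pos (by linarith)]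
      linarith
    refine h1.trans ?_
    rw [hB]
    exact Finset.single_le_sum (f := fun φ : K →+* ℂ => ‖φ (δ : K)‖)
      (fun _ _ => norm_nonneg _) (Finset.mem_univ φ)
  by_cases hAne : hAfin.toFinset.Nonempty
  · set φ₀ := realEmb K hK (Classical.arbitrary (K →+* ℂ)) with hφ₀
    have himgne : (hAfin.toFinset.image (fun a : 𝓞 K => φ₀ (a : K))).Nonempty := hAne.image _
    set ε := (hAfin.toFinset.image (fun a : 𝓞 K => φ₀ (a : K))).min' himgne with hε
    have hεpos : 0 < ε := by
      obtain ⟨a, ha, hae⟩ := Finset.mem_image.mp (Finset.min'_mem _ himgne)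
      have hpos : 0 < φ₀ (a : K) := (hAfin.mem_toFinset.mp ha).1 φ₀
      rw [hε, ← hae]
      exact hpos
    set N := Nat.ceil (φ₀ (δ : K) / ε) with hN
    have hcard : ∀ lam : Multiset (𝓞 K), IsPartition K δ lam → Multiset.card lam ≤ N := by
      intro lam hlam
      have hbound : (Multiset.card lam) • ε ≤ (lam.map fun x : 𝓞 K => φ₀ (x : K)).sum := by
        have : Multiset.card (lam.map fun x : 𝓞 K => φ₀ (x : K)) • ε
            ≤ (lam.map fun x : 𝓞 K => φ₀ (x : K)).sum := by
          apply Multiset.card_nsmul_le_sum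
          intro r hr
          rw [Multiset.mem_map] at hr
          obtain ⟨y, hy, rfl⟩ := hr
          refine Finset.min'_le _ _ ?_
          exact Finset.mem_image.mpr ⟨y, hAfin.mem_toFinset.mpr (hmem lam hlam y hy), rfl⟩
        simpa using this
      have hsum : (lam.map fun x : 𝓞 K => φ₀ (x : K)).sum = φ₀ (δ : K) := by
        rw [← hlam.2, coe_multiset_sum, map_multiset_sum, Multiset.map_map]
        rfl
      rw [hsum] at hbound
      have h2 : (Multiset.card lam : ℝ) ≤ φ₀ (δ : K) / ε := by
        rw [le_div_iff₀ hεpos]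
        simpa [nsmul_eq_mul] using hbound
      have h3 : (Multiset.card lam : ℝ) ≤ (N : ℝ) :=
        h2.trans (Nat.le_ceil _)
      exact_mod_cast h3
    apply (multisets_finite hAfin.toFinset N).subset
    intro lam hlam
    exact ⟨fun x hx => hAfin.mem_toFinset.mpr (hmem lam hlam x hx), hcard lam hlam⟩
  · apply (Set.finite_singleton (0 : Multiset (𝓞 K))).subset
    intro lam hlam
    have : lam = 0 := by
      rw [Multiset.eq_zero_iff_forall_notMem]
      intro x hx
      exact hAne ⟨x, hAfin.mem_toFinset.mpr (hmem lam hlam x hx)⟩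
    simp [this]

lemma fiber_card (φ₀ : K →+* ℝ) (H : Set (𝓞 K)) (hH : ∀ x ∈ H, TPos K x)
    (δ : 𝓞 K) (mu : Multiset (𝓞 K)) (hmu1 : mu.sum = δ) (hmu2 : ∀ x ∈ mu, IsPrim K x) :
    Nat.card {lam : Multiset (𝓞 K) | ((∀ x ∈ lam, x ∈ H) ∧ lam.sum = δ) ∧ Phi K lam = mu}
      = ∏ γ ∈ mu.toFinset,
          {s : Multiset (𝓞 K) |
              (∀ x ∈ s, x ∈ H ∧ ∃ k : ℕ, 0 < k ∧ x = (k : 𝓞 K) * γ) ∧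
                s.sum = (mu.count γ : 𝓞 K) * γ}.ncard := by
  classical
  have hγprim : ∀ γ ∈ mu.toFinset, IsPrim K γ := fun γ h => hmu2 γ (Multiset.mem_toFinset.mp h)
  have hγne : ∀ γ ∈ mu.toFinset, γ ≠ 0 := fun γ h => tpos_ne_zero K φ₀ (hγprim γ h).1
  -- the filtered multisets land in the right sets
  have toFun_mem : ∀ lam : Multiset (𝓞 K), (∀ x ∈ lam, x ∈ H) → Phi K lam = mu →
      ∀ γ ∈ mu.toFinset,
      (lam.filter (fun x => (pdec K x).2 = γ)) ∈
        {s : Multiset (𝓞 K) |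
            (∀ x ∈ s, x ∈ H ∧ ∃ k : ℕ, 0 < k ∧ x = (k : 𝓞 K) * γ) ∧
              s.sum = (mu.count γ : 𝓞 K) * γ} := by
    intro lam hlamH hlamPhi γ hγ
    have hTP : ∀ x ∈ lam, TPos K x := fun x hx => hH x (hlamH x hx)
    constructor
    · intro x hx
      have hx' := Multiset.mem_of_mem_filter hx
      have hpg := Multiset.of_mem_filter hx
      obtain ⟨h1, h2, h3⟩ := pdec_spec K φ₀ (hTP x hx')
      exact ⟨hlamH x hx', (pdec K x).1, h1, by rw [← hpg]; exact h3⟩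
    · have hmul : ∀ x ∈ lam.filter (fun x => (pdec K x).2 = γ),
          x = ((pdec K x).1 : 𝓞 K) * γ := by
        intro x hx
        have hx' := Multiset.mem_of_mem_filter hx
        have hpg := Multiset.of_mem_filter hx
        rw [← hpg]
        exact (pdec_spec K φ₀ (hTP x hx')).2.2
      rw [sum_of_multiples K γ _ hmul, ← count_Phi K γ lam, hlamPhi]
  -- Phi of an element of the γ-component
  have hPhif : ∀ γ ∈ mu.toFinset, ∀ s : Multiset (𝓞 K),
      (∀ x ∈ s, x ∈ H ∧ ∃ k : ℕ, 0 < k ∧ x = (k : 𝓞 K) * γ) →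
      s.sum = (mu.count γ : 𝓞 K) * γ →
      Phi K s = Multiset.replicate (mu.count γ) γ := by
    intro γ hγ s hs hsum
    have hmul : ∀ x ∈ s, x = ((pdec K x).1 : 𝓞 K) * γ := by
      intro x hx
      obtain ⟨-, k, hk, hxk⟩ := hs x hx
      rw [pdec_eq K φ₀ hk (hγprim γ hγ) hxk]
      exact hxk
    have hcnt : ((s.map fun x => (pdec K x).1).sum) = mu.count γ := by
      have h1 := sum_of_multiples K γ s hmul
      rw [hsum] at h1
      have h2 : (((s.map fun x => (pdec K x).1).sum : ℕ) : 𝓞 K) = ((mu.count γ : ℕ) : 𝓞 K) :=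
        mul_right_cancel₀ (hγne γ hγ) h1.symm
      exact_mod_cast h2
    rw [Multiset.eq_replicate]
    constructor
    · rw [Phi, Multiset.card_bind, ← hcnt]
      congr 1
      apply Multiset.map_congr rfl
      intro x hx
      simp
    · intro b hb
      rw [Phi, Multiset.mem_bind] at hb
      obtain ⟨x, hx, hb⟩ := hb
      obtain ⟨-, k, hk, hxk⟩ := hs x hx
      rw [pdec_eq K φ₀ hk (hγprim γ hγ) hxk] at hb
      exact Multiset.eq_of_mem_replicate hb
  -- the equivalence between the fiber and the product of the component sets
  have e : {lam : Multiset (𝓞 K) | ((∀ x ∈ lam, x ∈ H) ∧ lam.sum = δ) ∧ Phi K lam = mu} ≃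
      (∀ γ : {x // x ∈ mu.toFinset},
        {s : Multiset (𝓞 K) //
          s ∈ {s : Multiset (𝓞 K) |
              (∀ x ∈ s, x ∈ H ∧ ∃ k : ℕ, 0 < k ∧ x = (k : 𝓞 K) * (γ : 𝓞 K)) ∧
                s.sum = (mu.count (γ : 𝓞 K) : 𝓞 K) * (γ : 𝓞 K)}}) := by
    refine ⟨fun L => fun γ => ⟨L.1.filter (fun x => (pdec K x).2 = (γ : 𝓞 K)),
        toFun_mem L.1 L.2.1.1 L.2.2 (γ : 𝓞 K) γ.2⟩,
      fun f => ⟨∑ γ ∈ mu.toFinset.attach, (f γ).1, ?_⟩, ?_, ?_⟩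
    · -- invFun membership
      have hH' : ∀ x ∈ ∑ γ ∈ mu.toFinset.attach, (f γ).1, x ∈ H := by
        intro x hx
        rw [Multiset.mem_sum] at hx
        obtain ⟨γ, -, hx⟩ := hx
        exact ((f γ).2.1 x hx).1
      have hPhi : Phi K (∑ γ ∈ mu.toFinset.attach, (f γ).1) = mu := by
        rw [addhom_finset_sum (Phi K) (Phi_zero K) (Phi_add K) _ _]
        have hterm : ∀ γ ∈ mu.toFinset.attach,
            Phi K (f γ).1 = Multiset.replicate (mu.count (γ : 𝓞 K)) (γ : 𝓞 K) := by
          intro γ _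
          exact hPhif (γ : 𝓞 K) γ.2 (f γ).1 (f γ).2.1 (f γ).2.2
        rw [Finset.sum_congr rfl hterm]
        rw [Finset.sum_attach mu.toFinset
          (fun γ => Multiset.replicate (mu.count γ) γ)]
        have := Multiset.toFinset_sum_count_nsmul_eq mu
        simpa [Multiset.nsmul_singleton] using this
      refine ⟨⟨hH', ?_⟩, hPhi⟩
      have hTP : ∀ x ∈ ∑ γ ∈ mu.toFinset.attach, (f γ).1, TPos K x :=
        fun x hx => hH x (hH' x hx)
      rw [← Phi_sum_eq K φ₀ hTP, hPhi, hmu1]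
    · -- left inverse
      intro L
      apply Subtype.ext
      show (∑ γ ∈ mu.toFinset.attach,
          L.1.filter (fun x => (pdec K x).2 = (γ : 𝓞 K))) = L.1
      rw [Finset.sum_attach mu.toFinset (fun γ => L.1.filter (fun x => (pdec K x).2 = γ))]
      apply sum_filter_eq
      intro x hx
      rw [Multiset.mem_toFinset, ← L.2.2, Phi, Multiset.mem_bind]
      have hTP := hH x (L.2.1.1 x hx)
      exact ⟨x, hx, Multiset.mem_replicate.mpr ⟨(pdec_spec K φ₀ hTP).1.ne', rfl⟩⟩
    · -- right inverse
      intro f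
      funext γ
      apply Subtype.ext
      show Multiset.filter (fun x => (pdec K x).2 = (γ : 𝓞 K))
          (∑ γ' ∈ mu.toFinset.attach, (f γ').1) = (f γ).1
      rw [addhom_finset_sum (Multiset.filter (fun x => (pdec K x).2 = (γ : 𝓞 K)))
        (Multiset.filter_zero _) (fun a b => Multiset.filter_add _ a b)]
      have hterm : ∀ γ' ∈ mu.toFinset.attach,
          Multiset.filter (fun x => (pdec K x).2 = (γ : 𝓞 K)) (f γ').1
            = if γ' = γ then (f γ).1 else 0 := by
        intro γ' _
        by_cases h : γ' = γ
        · subst h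
          rw [if_pos rfl, Multiset.filter_eq_self]
          intro x hx
          obtain ⟨-, k, hk, hxk⟩ := (f γ').2.1 x hx
          rw [pdec_eq K φ₀ hk (hγprim _ γ'.2) hxk]
        · rw [if_neg h]
          refine Multiset.filter_eq_nil.mpr ?_
          intro x hx
          obtain ⟨-, k, hk, hxk⟩ := (f γ').2.1 x hx
          rw [pdec_eq K φ₀ hk (hγprim _ γ'.2) hxk]
          intro heq
          exact h (Subtype.ext heq)
      rw [Finset.sum_congr rfl hterm,
        Finset.sum_ite_eq' mu.toFinset.attach γ (fun _ => (f γ).1),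
        if_pos (Finset.mem_attach _ γ)]
  calc Nat.card {lam : Multiset (𝓞 K) | ((∀ x ∈ lam, x ∈ H) ∧ lam.sum = δ) ∧ Phi K lam = mu}
      = Nat.card (∀ γ : {x // x ∈ mu.toFinset},
          {s : Multiset (𝓞 K) //
            s ∈ {s : Multiset (𝓞 K) |
                (∀ x ∈ s, x ∈ H ∧ ∃ k : ℕ, 0 < k ∧ x = (k : 𝓞 K) * (γ : 𝓞 K)) ∧
                  s.sum = (mu.count (γ : 𝓞 K) : 𝓞 K) * (γ : 𝓞 K)}}) := Nat.card_congr e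
    _ = ∏ γ : {x // x ∈ mu.toFinset},
          Nat.card {s : Multiset (𝓞 K) //
            s ∈ {s : Multiset (𝓞 K) |
                (∀ x ∈ s, x ∈ H ∧ ∃ k : ℕ, 0 < k ∧ x = (k : 𝓞 K) * (γ : 𝓞 K)) ∧
                  s.sum = (mu.count (γ : 𝓞 K) : 𝓞 K) * (γ : 𝓞 K)}} := Nat.card_pi
    _ = ∏ γ : {x // x ∈ mu.toFinset},
          {s : Multiset (𝓞 K) |
              (∀ x ∈ s, x ∈ H ∧ ∃ k : ℕ, 0 < k ∧ x = (k : 𝓞 K) * (γ : 𝓞 K)) ∧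
                s.sum = (mu.count (γ : 𝓞 K) : 𝓞 K) * (γ : 𝓞 K)}.ncard := by
        apply Finset.prod_congr rfl
        intro γ _
        exact Nat.card_coe_set_eq _
    _ = ∏ γ ∈ mu.toFinset,
          {s : Multiset (𝓞 K) |
              (∀ x ∈ s, x ∈ H ∧ ∃ k : ℕ, 0 < k ∧ x = (k : 𝓞 K) * γ) ∧
                s.sum = (mu.count γ : 𝓞 K) * γ}.ncard :=
        Finset.prod_coe_sort mu.toFinset (fun γ =>
          {s : Multiset (𝓞 K) |
              (∀ x ∈ s, x ∈ H ∧ ∃ k : ℕ, 0 < k ∧ x = (k : 𝓞 K) * γ) ∧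
                s.sum = (mu.count γ : 𝓞 K) * γ}.ncard)

theorem card_partitions_in_H_eq_sum_over_primitive_partitions
    (hK : TotallyReal K) (H : Set (𝓞 K)) (hH : ∀ x ∈ H, TPos K x)
    (δ : 𝓞 K) (hδ : TPos K δ) :
    {lam : Multiset (𝓞 K) | (∀ x ∈ lam, x ∈ H) ∧ lam.sum = δ}.ncard
      = ∑ᶠ mu ∈ {mu : Multiset (𝓞 K) | IsPartition K δ mu ∧ ∀ x ∈ mu, IsPrim K x},
          ∏ γ ∈ mu.toFinset,
            {s : Multiset (𝓞 K) |
                (∀ x ∈ s, x ∈ H ∧ ∃ k : ℕ, 0 < k ∧ x = (k : 𝓞 K) * γ) ∧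
                  s.sum = (mu.count γ : 𝓞 K) * γ}.ncard := by
  classical
  have φ₀ : K →+* ℝ := realEmb K hK (Classical.arbitrary (K →+* ℂ))
  have hParts := parts_finite K hK δ
  have hL : {lam : Multiset (𝓞 K) | (∀ x ∈ lam, x ∈ H) ∧ lam.sum = δ}.Finite :=
    hParts.subset (fun lam hlam => ⟨fun x hx => hH x (hlam.1 x hx), hlam.2⟩)
  have hP : {mu : Multiset (𝓞 K) | IsPartition K δ mu ∧ ∀ x ∈ mu, IsPrim K x}.Finite :=
    hParts.subset (fun mu hmu => hmu.1)
  rw [← hP.coe_toFinset, finsum_mem_coe_finset, Set.ncard_eq_toFinset_card _ hL,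
    Finset.card_eq_sum_card_fiberwise (f := Phi K) (t := hP.toFinset) ?hmap]
  case hmap =>
    intro lam hlam
    rw [Finset.mem_coe, Set.Finite.mem_toFinset] at hlam ⊢
    have hTP : ∀ x ∈ lam, TPos K x := fun x hx => hH x (hlam.1 x hx)
    exact ⟨⟨fun γ hγ => (Phi_mem_prim K φ₀ hTP γ hγ).1,
      by rw [Phi_sum_eq K φ₀ hTP, hlam.2]⟩, Phi_mem_prim K φ₀ hTP⟩
  apply Finset.sum_congr rfl
  intro mu hmu
  rw [Set.Finite.mem_toFinset] at hmu
  have hfe : (↑(hL.toFinset.filter (fun lam => Phi K lam = mu)) : Set (Multiset (𝓞 K)))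
      = {lam : Multiset (𝓞 K) | ((∀ x ∈ lam, x ∈ H) ∧ lam.sum = δ) ∧ Phi K lam = mu} := by
    ext lam
    simp only [Finset.coe_filter, Set.Finite.mem_toFinset, Set.mem_setOf_eq]
  rw [← Set.ncard_coe_finset, ← Nat.card_coe_set_eq, hfe, Nat.card_coe_set_eq,
    ← Nat.card_coe_set_eq]
  exact fiber_card K φ₀ H hH δ mu hmu.1.2 hmu.2
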